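/- Let D be a bounded proper subdomain of ℝⁿ, n ≥ 2, and let x, y ∈ D. Then every rectifiable path γ joining x and y in D satisfies ∫_γ |dz|/(d(D) − δ_D(z)) ≥ log[(d(D) − δ_D(y))/(d(D) − δ_D(x))]; consequently n_D(x, y) ≥ log[(d(D) − δ_D(y))/(d(D) − δ_D(x))]. -/

import Mathlib

open Metric Set

variable {E : Type*} [NormedAddCommGroup E] [NormedSpace ℝ E]

/-- δ_D(z): the Euclidean distance from `z` to the boundary `∂D`. -/
noncomputable def bdist (D : Set E) (z : E) : ℝ := Metric.infDist z (frontier D)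

/-- The m-density `m_D(z) = d(D) / (δ_D(z)·(d(D) − δ_D(z)))`. -/
noncomputable def mDensity (D : Set E) (z : E) : ℝ :=
  Metric.diam D / (bdist D z * (Metric.diam D - bdist D z))

/-- A rectifiable path in `D` from `x` to `y`, modeled as a Lipschitz map on `[0,1]`. -/
def IsRectPathIn (D : Set E) (x y : E) (γ : ℝ → E) : Prop :=
  (∃ K : NNReal, LipschitzWith K γ) ∧ γ 0 = x ∧ γ 1 = y ∧ ∀ t ∈ Set.Icc (0:ℝ) 1, γ t ∈ D

/-- The line integral `∫_γ ρ(z) |dz|` of a density `ρ` along a path `γ`. -/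
noncomputable def pathIntegral (ρ : E → ℝ) (γ : ℝ → E) : ℝ :=
  ∫ t in (0:ℝ)..1, ρ (γ t) * ‖deriv γ t‖

/-- `inf_γ ∫_γ ρ(z)|dz|` over all rectifiable paths `γ` joining `x` and `y` in `D`. -/
noncomputable def pathDist (ρ : E → ℝ) (D : Set E) (x y : E) : ℝ :=
  sInf (pathIntegral ρ '' {γ | IsRectPathIn D x y γ})

/-- The metric `m_D`. -/
noncomputable def mDist (D : Set E) (x y : E) : ℝ := pathDist (mDensity D) D x y

/-- The quasihyperbolic metric `k_D`. -/
noncomputable def kDist (D : Set E) (x y : E) : ℝ :=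
  pathDist (fun z => 1 / bdist D z) D x y

/-- The n-density `z ↦ 1/(d(D) − δ_D(z))`. -/
noncomputable def nDensity (D : Set E) (z : E) : ℝ :=
  1 / (Metric.diam D - bdist D z)

/-- The metric $n_D$. -/
noncomputable def nDist (D : Set E) (x y : E) : ℝ := pathDist (nDensity D) D x y

/-! Along a Lipschitz path `γ` in `D` put `v t = d(D) - δ_D(γ t)`. A ball of radius `δ_D(z)`
about `z ∈ D` lies in `D`, so `2 δ_D(z) ≤ d(D)` and `v` stays positive; since `δ_D` is
1-Lipschitz, so is `v` along `γ`, with `v' ≤ |γ'|` almost everywhere. Hence `log v` is Lipschitz,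
thus absolutely continuous, and `log v(1) - log v(0) = ∫ v'/v ≤ ∫ |γ'|/v`. -/

open Filter Topology MeasureTheory

theorem Real.lipschitzOnWith_log_Ici {c : ℝ} (hc : 0 < c) :
    LipschitzOnWith (Real.toNNReal c⁻¹) Real.log (Ici c) := by
  refine (convex_Ici c).lipschitzOnWith_of_nnnorm_deriv_le
    (fun x hx => Real.differentiableAt_log (hc.trans_le hx).ne') fun x hxc => ?_
  have hx : 0 < x := hc.trans_le hxc
  rw [Real.deriv_log, ← NNReal.coe_le_coe, coe_nnnorm, Real.norm_eq_abs, abs_inv,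
    abs_of_pos hx, Real.coe_toNNReal _ (inv_nonneg.2 hc.le)]
  exact inv_anti₀ hc hxc

theorem LipschitzWith.abs_deriv_comp_le {u : E → ℝ} {K : NNReal} (hu : LipschitzWith K u)
    {γ : ℝ → E} {t : ℝ} (hγ : DifferentiableAt ℝ γ t) :
    |deriv (u ∘ γ) t| ≤ K * ‖deriv γ t‖ := by
  by_cases huγ : DifferentiableAt ℝ (u ∘ γ) t
  swap
  · rw [deriv_zero_of_not_differentiableAt huγ, abs_zero]
    positivity
  have hslope_uγ := (hasDerivAt_iff_tendsto_slope.1 huγ.hasDerivAt).abs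
  have hslope_γ := (hasDerivAt_iff_tendsto_slope.1 hγ.hasDerivAt).norm.const_mul (K : ℝ)
  refine le_of_tendsto_of_tendsto hslope_uγ hslope_γ (Eventually.of_forall fun s => ?_)
  dsimp only
  rw [slope_def_module, slope_def_module, smul_eq_mul, abs_mul, norm_smul, Real.norm_eq_abs,
    mul_left_comm]
  exact mul_le_mul_of_nonneg_left ((hu.dist_le_mul _ _).trans_eq (by rw [dist_eq_norm]))
    (abs_nonneg _)

theorem LipschitzWith.log_sub_log_le_integral_norm_deriv_div [FiniteDimensional ℝ E] {u : E → ℝ}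
    (hu : LipschitzWith 1 u) {γ : ℝ → E} {K : NNReal} (hγ : LipschitzWith K γ) {a b : ℝ}
    (hab : a ≤ b) (hpos : ∀ t ∈ Icc a b, 0 < u (γ t)) :
    Real.log (u (γ b)) - Real.log (u (γ a)) ≤ ∫ t in a..b, ‖deriv γ t‖ / u (γ t) := by
  set v := u ∘ γ
  have hv : LipschitzWith (1 * K) v := hu.comp hγ
  obtain ⟨t₀, ht₀, hmin⟩ :=
    isCompact_Icc.exists_isMinOn (nonempty_Icc.2 hab) hv.continuous.continuousOn
  have hc : 0 < v t₀ := hpos t₀ ht₀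
  have hvc : ∀ t ∈ Icc a b, v t₀ ≤ v t := fun t ht => hmin ht
  have hlog : LipschitzOnWith ((v t₀)⁻¹.toNNReal * (1 * K)) (Real.log ∘ v) (uIcc a b) := by
    rw [uIcc_of_le hab]
    exact (Real.lipschitzOnWith_log_Ici hc).comp hv.lipschitzOnWith hvc
  have hac := hlog.absolutelyContinuousOnInterval
  change (Real.log ∘ v) b - (Real.log ∘ v) a ≤ _
  rw [← hac.integral_deriv_eq_sub]
  have hbound_int : IntervalIntegrable (fun t => ‖deriv γ t‖ / v t) volume a b := by
    refine (intervalIntegrable_const (c := (K : ℝ) / v t₀)).mono_fun'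
      ((aestronglyMeasurable_deriv γ _).norm.div₀ hv.continuous.aestronglyMeasurable) ?_
    filter_upwards [ae_restrict_mem measurableSet_uIoc] with t ht
    rw [uIoc_of_le hab] at ht
    have hvt := hvc t (Ioc_subset_Icc_self ht)
    rw [norm_div, norm_norm, Real.norm_of_nonneg (hc.trans_le hvt).le]
    exact div_le_div₀ K.coe_nonneg (norm_deriv_le_of_lipschitz hγ) hc hvt
  refine intervalIntegral.integral_mono_ae_restrict hab hac.intervalIntegrable_deriv hbound_int ?_
  filter_upwards [ae_restrict_mem measurableSet_Icc,
    ae_restrict_of_ae hγ.ae_differentiableAt_real, ae_restrict_of_ae hv.ae_differentiableAt_real]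
    with t ht hγt hvt
  have hvt_pos := hpos t ht
  change deriv (fun s => Real.log (v s)) t ≤ _
  rw [(hvt.hasDerivAt.log hvt_pos.ne').deriv]
  refine div_le_div_of_nonneg_right ((le_abs_self _).trans ?_) hvt_pos.le
  simpa using hu.abs_deriv_comp_le hγt

section Bdist

variable {F : Type*} [NormedAddCommGroup F]

theorem bdist_nonneg (D : Set F) (z : F) : 0 ≤ bdist D z := infDist_nonneg

theorem lipschitzWith_diam_sub_bdist (D : Set F) :
    LipschitzWith 1 (fun z => diam D - bdist D z) := by
  simpa [bdist] using (LipschitzWith.const (diam D)).sub (lipschitz_infDist_pt (frontier D))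

end Bdist

theorem ball_bdist_subset {D : Set E} (hD : IsOpen D) {z : E} (hz : z ∈ D) :
    ball z (bdist D z) ⊆ D := by
  rcases (bdist_nonneg D z).eq_or_lt with h | h
  · rw [← h, ball_zero]
    exact empty_subset D
  refine (convex_ball z _).isPreconnected.subset_of_closure_inter_subset hD
    ⟨z, mem_ball_self h, hz⟩ ?_
  rintro w ⟨hwD, hwb⟩
  by_contra hw
  exact disjoint_ball_infDist.notMem_of_mem_left hwb ⟨hwD, fun h => hw (interior_subset h)⟩

theorem bdist_pos {D : Set E} (hD : IsOpen D) (hD' : D ≠ univ) {z : E} (hz : z ∈ D) :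
    0 < bdist D z := by
  have hfr : (frontier D).Nonempty := nonempty_frontier_iff.2 ⟨⟨z, hz⟩, hD'⟩
  refine (isClosed_frontier.notMem_iff_infDist_pos hfr).1 fun h => ?_
  rw [hD.frontier_eq] at h
  exact h.2 hz

theorem two_mul_bdist_le_diam [Nontrivial E] {D : Set E} (hD : IsOpen D)
    (hDb : Bornology.IsBounded D) {z : E} (hz : z ∈ D) : 2 * bdist D z ≤ diam D := by
  rw [← diam_ball_eq z (bdist_nonneg D z)]
  exact diam_mono (ball_bdist_subset hD hz) hDb

theorem bdist_lt_diam [Nontrivial E] {D : Set E} (hD : IsOpen D) (hDb : Bornology.IsBounded D)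
    (hD' : D ≠ univ) {z : E} (hz : z ∈ D) : bdist D z < diam D := by
  linarith [bdist_pos hD hD' hz, two_mul_bdist_le_diam hD hDb hz]

section RectPath

variable {F : Type*} [NormedAddCommGroup F] {D : Set F}

theorem IsRectPathIn.symm {x y : F} {γ : ℝ → F} (hγ : IsRectPathIn D x y γ) :
    IsRectPathIn D y x (fun t => γ (1 - t)) := by
  obtain ⟨⟨K, hK⟩, h0, h1, hmem⟩ := hγ
  have hflip : LipschitzWith 1 (fun t : ℝ => 1 - t) :=
    LipschitzWith.of_dist_le_mul fun s t => by
      rw [Real.dist_eq, Real.dist_eq, sub_sub_sub_cancel_left, abs_sub_comm, NNReal.coe_one,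
        one_mul]
  refine ⟨⟨K * 1, hK.comp hflip⟩, by simpa using h1, by simpa using h0, fun t ht => ?_⟩
  exact hmem _ ⟨by linarith [ht.2], by linarith [ht.1]⟩

-- Written as a sum rather than by cases, the concatenation is visibly Lipschitz.
theorem IsRectPathIn.trans {x y z : F} {γ₁ γ₂ : ℝ → F} (h₁ : IsRectPathIn D x y γ₁)
    (h₂ : IsRectPathIn D y z γ₂) :
    IsRectPathIn D x z (fun t => γ₁ (min (2 * t) 1) + γ₂ (max (2 * t - 1) 0) - y) := by
  obtain ⟨⟨K₁, hK₁⟩, h₁0, h₁1, h₁mem⟩ := h₁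
  obtain ⟨⟨K₂, hK₂⟩, h₂0, h₂1, h₂mem⟩ := h₂
  have hdouble : LipschitzWith 2 (fun t : ℝ => 2 * t) :=
    LipschitzWith.of_dist_le_mul fun s t => by
      rw [Real.dist_eq, Real.dist_eq, ← mul_sub, abs_mul, abs_two, NNReal.coe_ofNat]
  have hshift : LipschitzWith 2 (fun t : ℝ => 2 * t - 1) :=
    LipschitzWith.of_dist_le_mul fun s t => by
      rw [Real.dist_eq, Real.dist_eq, sub_sub_sub_cancel_right, ← mul_sub, abs_mul, abs_two,
        NNReal.coe_ofNat]
  refine ⟨⟨_, ((hK₁.comp (hdouble.min_const 1)).add (hK₂.comp (hshift.max_const 0))).sub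
    (LipschitzWith.const y)⟩, by simp [h₁0, h₂0], by norm_num [h₁1, h₂1], fun t ht => ?_⟩
  dsimp only
  rcases le_total t (1 / 2) with h | h
  · rw [min_eq_left (by linarith), max_eq_right (by linarith), h₂0, add_sub_cancel_right]
    exact h₁mem _ ⟨by linarith [ht.1], by linarith⟩
  · rw [min_eq_right (by linarith), max_eq_left (by linarith), h₁1, add_sub_cancel_left]
    exact h₂mem _ ⟨by linarith, by linarith [ht.2]⟩

end RectPath

theorem isRectPathIn_lineMap {D : Set E} {x y : E} (h : segment ℝ x y ⊆ D) :
    IsRectPathIn D x y (AffineMap.lineMap x y) :=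
  ⟨⟨_, lipschitzWith_lineMap x y⟩, AffineMap.lineMap_apply_zero x y,
    AffineMap.lineMap_apply_one x y, fun _ ht => h (lineMap_mem_segment ℝ x y ht)⟩

theorem exists_isRectPathIn {D : Set E} (hD : IsOpen D) (hD' : IsPreconnected D) {x y : E}
    (hx : x ∈ D) (hy : y ∈ D) : ∃ γ, IsRectPathIn D x y γ := by
  refine hD'.induction₂ (fun x y => ∃ γ, IsRectPathIn D x y γ) (fun z hz => ?_)
    (fun _ _ _ _ _ _ ⟨γ₁, h₁⟩ ⟨γ₂, h₂⟩ => ⟨_, h₁.trans h₂⟩)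
    (fun _ _ _ _ ⟨γ, h⟩ => ⟨_, h.symm⟩) hx hy
  obtain ⟨r, hr, hball⟩ := Metric.isOpen_iff.1 hD z hz
  filter_upwards [nhdsWithin_le_nhds (ball_mem_nhds z hr)] with w hw
  exact ⟨_, isRectPathIn_lineMap
    (((convex_ball z r).segment_subset (mem_ball_self hr) hw).trans hball)⟩

theorem log_div_le_pathIntegral_nDensity [FiniteDimensional ℝ E] [Nontrivial E] {D : Set E}
    (hD : IsOpen D) (hDb : Bornology.IsBounded D) (hD' : D ≠ univ) {x y : E} {γ : ℝ → E}
    (hγ : IsRectPathIn D x y γ) :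
    Real.log ((diam D - bdist D y) / (diam D - bdist D x)) ≤ pathIntegral (nDensity D) γ := by
  obtain ⟨⟨K, hK⟩, rfl, rfl, hmem⟩ := hγ
  have hpos : ∀ t ∈ Icc (0 : ℝ) 1, 0 < diam D - bdist D (γ t) := fun t ht =>
    sub_pos.2 (bdist_lt_diam hD hDb hD' (hmem t ht))
  rw [Real.log_div (hpos 1 (right_mem_Icc.2 zero_le_one)).ne'
    (hpos 0 (left_mem_Icc.2 zero_le_one)).ne']
  calc _ ≤ ∫ t in (0 : ℝ)..1, ‖deriv γ t‖ / (diam D - bdist D (γ t)) :=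
        (lipschitzWith_diam_sub_bdist D).log_sub_log_le_integral_norm_deriv_div hK zero_le_one hpos
    _ = pathIntegral (nDensity D) γ := by simp only [pathIntegral, nDensity, one_div_mul_eq_div]

theorem log_div_le_nDist [FiniteDimensional ℝ E] [Nontrivial E] {D : Set E} (hD : IsOpen D)
    (hDc : IsPreconnected D) (hDb : Bornology.IsBounded D) (hD' : D ≠ univ) {x y : E}
    (hx : x ∈ D) (hy : y ∈ D) :
    Real.log ((diam D - bdist D y) / (diam D - bdist D x)) ≤ nDist D x y := by
  obtain ⟨γ, hγ⟩ := exists_isRectPathIn hD hDc hx hy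
  refine le_csInf ⟨_, γ, hγ, rfl⟩ ?_
  rintro _ ⟨γ, hγ, rfl⟩
  exact log_div_le_pathIntegral_nDensity hD hDb hD' hγ

/-- Lemma: logarithmic lower bound for the $n_D$-metric.
For a bounded proper subdomain $D ⊂ ℝ^n$, $n ≥ 2$, and $x, y ∈ D$, every rectifiable
path $γ$ joining $x$ and $y$ in $D$ satisfies
$∫_γ |dz|/(d(D) − δ_D(z)) ≥ \log[(d(D) − δ_D(y))/(d(D) − δ_D(x))]$; consequently
$n_D(x,y) ≥ \log[(d(D) − δ_D(y))/(d(D) − δ_D(x))]$. -/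
theorem nDist_log_lower_bound {n : ℕ} (hn : 2 ≤ n)
    (D : Set (EuclideanSpace ℝ (Fin n)))
    (hDopen : IsOpen D) (hDconn : IsConnected D)
    (hDbdd : Bornology.IsBounded D) (hDproper : D ≠ Set.univ)
    (x y : EuclideanSpace ℝ (Fin n)) (hx : x ∈ D) (hy : y ∈ D) :
    (∀ γ : ℝ → EuclideanSpace ℝ (Fin n), IsRectPathIn D x y γ →
      Real.log ((Metric.diam D - bdist D y) / (Metric.diam D - bdist D x))
        ≤ pathIntegral (nDensity D) γ) ∧
    Real.log ((Metric.diam D - bdist D y) / (Metric.diam D - bdist D x))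
      ≤ nDist D x y := by
  have : Nonempty (Fin n) := ⟨⟨0, by omega⟩⟩
  exact ⟨fun γ => log_div_le_pathIntegral_nDensity hDopen hDbdd hDproper,
    log_div_le_nDist hDopen hDconn.isPreconnected hDbdd hDproper hx hy⟩
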